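/- Suppose there exist d+1 pairwise mutually unbiased bases of ℂ^d, Alice prepares a qudit in a basis state of one of them, choosing each of the d basis states of the chosen basis with equal prior probability 1/d, and Bob measures with an arbitrary POVM. Then the total information satisfies Σ_{m=1}^{d+1} I_m < d; equivalently, the average mutual information per basis is less than d/(d+1) bits. -/

import Mathlib

open scoped BigOperators ComplexOrder
open Matrix

noncomputable section

/-- Shannon entropy (in bits) of a finitely-indexed probability vector. -/
def shannonEntropy {ι : Type*} [Fintype ι] (q : ι → ℝ) : ℝ :=
  -∑ i, q i * Real.logb 2 (q i)

/-- Born probability ⟨v|M|v⟩ of POVM element `M` on the (unit vector) state `v`. -/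
def outProb {d : ℕ} (M : Matrix (Fin d) (Fin d) ℂ) (v : Fin d → ℂ) : ℝ :=
  (star v ⬝ᵥ M.mulVec v).re

/-- A finite family of matrices is a POVM if each member is positive semidefinite
and they sum to the identity. -/
def IsPOVM {d : ℕ} {S : Type*} [Fintype S] (E : S → Matrix (Fin d) (Fin d) ℂ) : Prop :=
  (∀ s, (E s).PosSemidef) ∧ ∑ s, E s = 1

/-- `B` lists the vectors of an orthonormal basis of ℂ^d. -/
def IsONB {d : ℕ} (B : Fin d → Fin d → ℂ) : Prop :=
  ∀ i j, star (B i) ⬝ᵥ B j = if i = j then 1 else 0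

/-- Two bases of ℂ^d are mutually unbiased: all squared overlaps equal 1/d. -/
def AreMUB {d : ℕ} (B C : Fin d → Fin d → ℂ) : Prop :=
  ∀ i j, ‖star (B i) ⬝ᵥ C j‖ ^ 2 = 1 / d

/-- Mutual information (in bits) between Alice's input `i` (prior `p i`, state `B i`)
and Bob's POVM outcome `s`:  `I = H({p i}) - ∑ s p(s) H({p_{i|s}})`. -/
def mutInfo {d : ℕ} {S : Type*} [Fintype S] (B : Fin d → Fin d → ℂ) (p : Fin d → ℝ)
    (E : S → Matrix (Fin d) (Fin d) ℂ) : ℝ :=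
  shannonEntropy p -
    ∑ s, (∑ i, p i * outProb (E s) (B i)) *
      shannonEntropy (fun i =>
        p i * outProb (E s) (B i) / ∑ j, p j * outProb (E s) (B j))

/-!
Fix an outcome with POVM element `A` and `t = tr A > 0`. Under a uniform prior the posterior
distribution of the input prepared in basis `m` is `q_m = (⟨m_i|A|m_i⟩ / t)_i`, and its Shannon
entropy is at least its collision entropy `-log₂ ∑ᵢ q_{m,i}²`. For `k` pairwise mutually unbiased
bases, expanding `tr X² ≥ 0` for the Hermitian matrix `X = ∑ₘ (dephasing of A in basis m) - A - c·1`
gives `∑ₘ ∑ᵢ q_{m,i}² ≤ tr A² / t² + (k-1)/d ≤ 1 + (k-1)/d`, so by concavity of `log`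
`∑ₘ H(q_m) ≥ k log₂ (k / (1 + (k-1)/d))`. Averaging over the outcomes,
`∑ₘ I_m ≤ k (log₂ d - log₂ (k / (1 + (k-1)/d)))`, which for `k = d+1` equals
`(d+1) log₂ (2d/(d+1)) = (d+1) (1 + log₂ (1 - 1/(d+1))) < d`.
-/

namespace Matrix

variable {n : Type*} [Fintype n]

def ketBra (v : n → ℂ) : Matrix n n ℂ := vecMulVec v (star v)

omit [Fintype n] in
lemma isHermitian_ketBra (v : n → ℂ) : (ketBra v).IsHermitian := by
  ext k l
  simp [ketBra, vecMulVec_apply, mul_comm]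

lemma trace_ketBra_mul (v : n → ℂ) (A : Matrix n n ℂ) :
    (ketBra v * A).trace = star v ⬝ᵥ A *ᵥ v := by
  rw [ketBra, vecMulVec_mul, trace_vecMulVec, dotProduct_comm, dotProduct_mulVec]

lemma star_dotProduct_ketBra_mulVec (v w : n → ℂ) :
    star v ⬝ᵥ ketBra w *ᵥ v = (‖star w ⬝ᵥ v‖ ^ 2 : ℝ) := by
  have : star v ⬝ᵥ w = star (star w ⬝ᵥ v) := by
    rw [star_dotProduct, dotProduct_comm]
  rw [ketBra, vecMulVec_mulVec, op_smul_eq_smul, dotProduct_smul, smul_eq_mul, this,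
    Complex.star_def, Complex.mul_conj', Complex.ofReal_pow]

lemma IsHermitian.ofReal_re_star_dotProduct_mulVec {A : Matrix n n ℂ} (hA : A.IsHermitian)
    (v : n → ℂ) : ((star v ⬝ᵥ A *ᵥ v).re : ℂ) = star v ⬝ᵥ A *ᵥ v :=
  Complex.ext rfl (hA.im_star_dotProduct_mulVec_self v).symm

lemma IsHermitian.ofReal_re_trace {A : Matrix n n ℂ} (hA : A.IsHermitian) :
    (A.trace.re : ℂ) = A.trace :=
  Complex.conj_eq_iff_re.mp (by rw [← Complex.star_def, ← trace_conjTranspose, hA.eq])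

lemma IsHermitian.re_trace_mul_self_nonneg {A : Matrix n n ℂ} (hA : A.IsHermitian) :
    0 ≤ (A * A).trace.re := by
  have h := (posSemidef_conjTranspose_mul_self A).trace_nonneg
  rw [hA.eq] at h
  exact (Complex.nonneg_iff.mp h).1

lemma PosSemidef.re_trace_mul_self_le [DecidableEq n] {A : Matrix n n ℂ} (hA : A.PosSemidef) :
    (A * A).trace.re ≤ A.trace.re ^ 2 := by
  have htrace (X : Matrix n n ℂ) :
      (Unitary.conjStarAlgAut ℂ _ hA.1.eigenvectorUnitary X).trace = X.trace := by
    rw [Unitary.conjStarAlgAut_apply, trace_mul_cycle, Unitary.coe_star_mul_self, one_mul]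
  rw [hA.1.spectral_theorem, ← map_mul, htrace, htrace, diagonal_mul_diagonal, trace_diagonal,
    trace_diagonal]
  simp only [Function.comp_apply, Complex.re_sum, ← sq, ← RCLike.ofReal_pow]
  exact Finset.sum_sq_le_sq_sum_of_nonneg fun i _ => hA.eigenvalues_nonneg i

variable {d : ℕ}

def dephase (B : Fin d → Fin d → ℂ) (A : Matrix (Fin d) (Fin d) ℂ) :
    Matrix (Fin d) (Fin d) ℂ :=
  ∑ i, (outProb A (B i) : ℂ) • ketBra (B i)

lemma isHermitian_dephase (B : Fin d → Fin d → ℂ) (A : Matrix (Fin d) (Fin d) ℂ) :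
    (dephase B A).IsHermitian :=
  isSelfAdjoint_sum _ fun i _ => (isHermitian_ketBra (B i)).smul (Complex.conj_ofReal _)

lemma trace_dephase_mul (B : Fin d → Fin d → ℂ) (A M : Matrix (Fin d) (Fin d) ℂ) :
    (dephase B A * M).trace = ∑ i, (outProb A (B i) : ℂ) * (star (B i) ⬝ᵥ M *ᵥ B i) := by
  simp only [dephase, Finset.sum_mul, smul_mul_assoc, trace_sum, trace_smul, trace_ketBra_mul,
    smul_eq_mul]

lemma star_dotProduct_dephase_mulVec (C : Fin d → Fin d → ℂ) (A : Matrix (Fin d) (Fin d) ℂ)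
    (v : Fin d → ℂ) :
    star v ⬝ᵥ dephase C A *ᵥ v = ∑ j, (outProb A (C j) : ℂ) * (‖star (C j) ⬝ᵥ v‖ ^ 2 : ℝ) := by
  simp only [dephase, sum_mulVec, dotProduct_sum, smul_mulVec, dotProduct_smul, smul_eq_mul,
    star_dotProduct_ketBra_mulVec]

lemma IsHermitian.trace_dephase_mul_self {A : Matrix (Fin d) (Fin d) ℂ} (hA : A.IsHermitian)
    (B : Fin d → Fin d → ℂ) : (dephase B A * A).trace = ∑ i, (outProb A (B i) ^ 2 : ℝ) := by
  rw [trace_dephase_mul, Complex.ofReal_sum]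
  refine Finset.sum_congr rfl fun i _ => ?_
  rw [← hA.ofReal_re_star_dotProduct_mulVec, Complex.ofReal_pow, sq, outProb]

end Matrix

open Matrix

lemma outProb_nonneg {d : ℕ} {A : Matrix (Fin d) (Fin d) ℂ} (hA : A.PosSemidef)
    (v : Fin d → ℂ) : 0 ≤ outProb A v :=
  hA.re_dotProduct_nonneg v

section Basis

variable {d : ℕ} {B : Fin d → Fin d → ℂ}

lemma IsONB.sum_ketBra (hB : IsONB B) : ∑ i, ketBra (B i) = 1 := by
  let V : Matrix (Fin d) (Fin d) ℂ := of fun k i => B i k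
  have hV : Vᴴ * V = 1 := by
    ext i j
    simpa [V, mul_apply, one_apply, dotProduct, mul_comm] using hB i j
  rw [← mul_eq_one_comm.mp hV]
  ext k l
  simp [V, ketBra, mul_apply, Matrix.sum_apply, vecMulVec_apply]

lemma IsONB.sum_star_dotProduct_mulVec (hB : IsONB B) (A : Matrix (Fin d) (Fin d) ℂ) :
    ∑ i, star (B i) ⬝ᵥ A *ᵥ B i = A.trace := by
  simp_rw [← trace_ketBra_mul, ← trace_sum, ← Finset.sum_mul, hB.sum_ketBra, one_mul]

lemma IsONB.sum_outProb (hB : IsONB B) (A : Matrix (Fin d) (Fin d) ℂ) :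
    ∑ i, outProb A (B i) = A.trace.re := by
  rw [← hB.sum_star_dotProduct_mulVec A, Complex.re_sum]
  rfl

lemma IsONB.trace_dephase (hB : IsONB B) (A : Matrix (Fin d) (Fin d) ℂ) :
    (dephase B A).trace = A.trace.re := by
  rw [← hB.sum_outProb, Complex.ofReal_sum, ← mul_one (dephase B A), trace_dephase_mul]
  simp [hB _ _]

lemma IsONB.trace_dephase_mul_dephase (hB : IsONB B) (A : Matrix (Fin d) (Fin d) ℂ) :
    (dephase B A * dephase B A).trace = ∑ i, (outProb A (B i) ^ 2 : ℝ) := by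
  simp [trace_dephase_mul, star_dotProduct_dephase_mulVec, hB _ _, apply_ite, sq]

lemma AreMUB.trace_dephase_mul_dephase {C : Fin d → Fin d → ℂ} (hB : IsONB B) (hC : IsONB C)
    (hCB : AreMUB C B) (A : Matrix (Fin d) (Fin d) ℂ) :
    (dephase B A * dephase C A).trace = (A.trace.re ^ 2 / d : ℝ) := by
  simp only [trace_dephase_mul, star_dotProduct_dephase_mulVec, hCB _ _, ← Finset.sum_mul,
    ← Complex.ofReal_sum, hB.sum_outProb, hC.sum_outProb]
  push_cast
  ring

end Basis

theorem trace_sum_dephase_mul_sum_dephase {ι : Type*} [Fintype ι] {d : ℕ}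
    {B : ι → Fin d → Fin d → ℂ} (hB : ∀ m, IsONB (B m))
    (hMUB : Pairwise fun m n => AreMUB (B m) (B n)) (A : Matrix (Fin d) (Fin d) ℂ) :
    ((∑ m, dephase (B m) A) * ∑ m, dephase (B m) A).trace =
      (∑ m, ∑ i, outProb A (B m i) ^ 2 +
        Fintype.card ι * (Fintype.card ι - 1) * A.trace.re ^ 2 / d : ℝ) := by
  classical
  set t := A.trace.re
  have hpair (m n : ι) : (dephase (B m) A * dephase (B n) A).trace =
      ((t ^ 2 / d : ℝ) : ℂ) +
        if m = n then ((∑ i, outProb A (B m i) ^ 2 - t ^ 2 / d : ℝ) : ℂ) else 0 := by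
    split_ifs with h
    · subst h; rw [(hB m).trace_dephase_mul_dephase]; push_cast; ring
    · rw [AreMUB.trace_dephase_mul_dephase (hB m) (hB n) (hMUB (Ne.symm h))]; push_cast; ring
  simp only [Finset.sum_mul, Finset.mul_sum, trace_sum, hpair, Finset.sum_add_distrib,
    Finset.sum_ite_eq', Finset.mem_univ, if_true, Finset.sum_const, Finset.card_univ]
  push_cast
  simp only [Finset.sum_sub_distrib, Finset.sum_const, Finset.card_univ, nsmul_eq_mul]
  ring

theorem sum_sq_outProb_le_of_pairwise_areMUB {ι : Type*} [Fintype ι] {d : ℕ}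
    {B : ι → Fin d → Fin d → ℂ} (hB : ∀ m, IsONB (B m))
    (hMUB : Pairwise fun m n => AreMUB (B m) (B n))
    {A : Matrix (Fin d) (Fin d) ℂ} (hA : A.IsHermitian) :
    ∑ m, ∑ i, outProb A (B m i) ^ 2 ≤
      (A * A).trace.re + (Fintype.card ι - 1) / d * A.trace.re ^ 2 := by
  rcases Nat.eq_zero_or_pos d with rfl | hd
  · simp
  set t := A.trace.re
  set k : ℝ := (Fintype.card ι : ℝ)
  set S := ∑ m, ∑ i, outProb A (B m i) ^ 2
  set Q := ∑ m, dephase (B m) A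
  have hQ : Q.trace = (k * t : ℝ) := by
    rw [trace_sum, Finset.sum_congr rfl fun m _ => (hB m).trace_dephase A]
    simp [k, t]
  have hQA : (Q * A).trace = S := by
    simp [Q, Finset.sum_mul, trace_sum, hA.trace_dephase_mul_self, S]
  -- `c` minimises `tr (Q - A - c • 1)²` over `c`
  set c : ℝ := (k - 1) * t / d
  have hXX : 0 ≤ (Q * Q).trace.re - 2 * (Q * A).trace.re + (A * A).trace.re
      - 2 * c * Q.trace.re + 2 * c * t + c ^ 2 * d := by
    have hX : (Q - A - (c : ℂ) • 1).IsHermitian :=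
      (((isSelfAdjoint_sum _ fun m _ => isHermitian_dephase (B m) A).sub hA).sub
        (isHermitian_one.smul (Complex.conj_ofReal c)))
    convert hX.re_trace_mul_self_nonneg using 1
    simp only [sub_mul, mul_sub, smul_mul_assoc, mul_smul_comm, one_mul, mul_one, trace_sub,
      trace_smul, trace_one, Complex.sub_re, smul_eq_mul, Complex.mul_re]
    rw [trace_mul_comm A Q, ← hA.ofReal_re_trace]
    simp only [Complex.ofReal_re, Complex.ofReal_im, zero_mul, sub_zero, mul_zero,
      Fintype.card_fin, Complex.natCast_re, Complex.natCast_im, Complex.mul_im, add_zero]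
    ring
  rw [trace_sum_dephase_mul_sum_dephase hB hMUB, hQA, hQ] at hXX
  simp only [Complex.ofReal_re] at hXX
  have hc : k * (k - 1) * t ^ 2 / d - 2 * c * (k * t) + 2 * c * t + c ^ 2 * d =
      (k - 1) / d * t ^ 2 := by
    simp only [c]; field_simp; ring
  linarith

open Real

section Entropy

variable {ι : Type*} [Fintype ι]

lemma sum_sq_pos_of_sum_eq_one {q : ι → ℝ} (hq1 : ∑ i, q i = 1) : 0 < ∑ i, q i ^ 2 := by
  obtain ⟨i, hi⟩ : ∃ i, q i ≠ 0 := by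
    by_contra! h
    simp [h] at hq1
  exact lt_of_lt_of_le (by positivity) (Finset.single_le_sum (fun j _ => sq_nonneg (q j))
    (Finset.mem_univ i))

lemma sum_mul_log_le_log_sum_sq {q : ι → ℝ} (hq : ∀ i, 0 ≤ q i) (hq1 : ∑ i, q i = 1) :
    ∑ i, q i * log (q i) ≤ log (∑ i, q i ^ 2) := by
  set c := ∑ i, q i ^ 2
  have hc : 0 < c := sum_sq_pos_of_sum_eq_one hq1
  -- `log (q / c) ≤ q / c - 1`, weighted by `q`
  have hterm (i : ι) : q i * log (q i) ≤ q i ^ 2 / c - q i + q i * log c := by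
    rcases (hq i).eq_or_lt with h | h
    · simp [← h]
    · have := mul_le_mul_of_nonneg_left (log_le_sub_one_of_pos (div_pos h hc)) h.le
      rw [log_div h.ne' hc.ne'] at this
      linear_combination this
  calc ∑ i, q i * log (q i) ≤ ∑ i, (q i ^ 2 / c - q i + q i * log c) :=
        Finset.sum_le_sum fun i _ => hterm i
    _ = log c := by
        rw [Finset.sum_add_distrib, Finset.sum_sub_distrib, ← Finset.sum_div, ← Finset.sum_mul,
          hq1, div_self hc.ne']
        ring

lemma neg_logb_sum_sq_le_shannonEntropy {q : ι → ℝ} (hq : ∀ i, 0 ≤ q i) (hq1 : ∑ i, q i = 1) :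
    -logb 2 (∑ i, q i ^ 2) ≤ shannonEntropy q := by
  simp only [shannonEntropy, logb, ← mul_div_assoc, ← Finset.sum_div, neg_le_neg_iff]
  exact div_le_div_of_nonneg_right (sum_mul_log_le_log_sum_sq hq hq1) (log_nonneg one_le_two)

lemma card_mul_logb_le_sum_neg_logb {b a : ℝ} (hb : 1 < b) {c : ι → ℝ} (hc : ∀ m, 0 < c m)
    (hca : ∑ m, c m ≤ a) :
    Fintype.card ι * logb b (Fintype.card ι / a) ≤ ∑ m, -logb b (c m) := by
  rcases isEmpty_or_nonempty ι with hι | hι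
  · simp
  have ha : 0 < a := (Finset.sum_pos (fun m _ => hc m) Finset.univ_nonempty).trans_le hca
  set k : ℝ := (Fintype.card ι : ℝ)
  have hk : 0 < k := by simp only [k]; exact_mod_cast Fintype.card_pos
  -- `log (c * k / a) ≤ c * k / a - 1`, summed over `m`
  have hterm (m : ι) : log (c m) + log (k / a) ≤ c m * (k / a) - 1 := by
    rw [← log_mul (hc m).ne' (by positivity)]
    exact log_le_sub_one_of_pos (by have := hc m; positivity)
  have hsum := Finset.sum_le_sum fun m (_ : m ∈ Finset.univ) => hterm m
  simp only [Finset.sum_add_distrib, Finset.sum_sub_distrib, ← Finset.sum_mul, Finset.sum_const,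
    Finset.card_univ, nsmul_eq_mul, mul_one] at hsum
  have hck : (∑ m, c m) * (k / a) ≤ k := by
    calc (∑ m, c m) * (k / a) ≤ a * (k / a) := by gcongr
      _ = k := by field_simp
  simp only [logb, ← mul_div_assoc, ← neg_div, ← Finset.sum_div, Finset.sum_neg_distrib]
  exact div_le_div_of_nonneg_right (by linarith) (log_nonneg hb.le)

end Entropy

lemma shannonEntropy_uniform (d : ℕ) :
    shannonEntropy (fun _ : Fin d => 1 / (d : ℝ)) = logb 2 d := by
  rcases Nat.eq_zero_or_pos d with rfl | hd
  · simp [shannonEntropy]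
  simp only [shannonEntropy, Finset.sum_const, Finset.card_univ, Fintype.card_fin, nsmul_eq_mul,
    one_div, logb_inv]
  field_simp

/-- The entropy `H({p_{i|s}})` of the input given the outcome `A` under a uniform prior on `B`,
where `p_{i|s} = ⟨i|A|i⟩ / tr A`. -/
def posteriorEntropy {d : ℕ} (B : Fin d → Fin d → ℂ) (A : Matrix (Fin d) (Fin d) ℂ) : ℝ :=
  shannonEntropy fun i => outProb A (B i) / A.trace.re

theorem card_mul_logb_le_sum_posteriorEntropy {ι : Type*} [Fintype ι] {d : ℕ}
    {B : ι → Fin d → Fin d → ℂ} (hB : ∀ m, IsONB (B m))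
    (hMUB : Pairwise fun m n => AreMUB (B m) (B n))
    {A : Matrix (Fin d) (Fin d) ℂ} (hA : A.PosSemidef) (htr : 0 < A.trace.re) :
    Fintype.card ι * logb 2 (Fintype.card ι / (1 + (Fintype.card ι - 1) / d)) ≤
      ∑ m, posteriorEntropy (B m) A := by
  set t := A.trace.re
  set q : ι → Fin d → ℝ := fun m i => outProb A (B m i) / t
  have hq (m : ι) (i : Fin d) : 0 ≤ q m i := div_nonneg (outProb_nonneg hA _) htr.le
  have hq1 (m : ι) : ∑ i, q m i = 1 := by
    rw [← Finset.sum_div, (hB m).sum_outProb, div_self htr.ne']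
  have hcoll : ∑ m, ∑ i, q m i ^ 2 ≤ 1 + (Fintype.card ι - 1) / d := by
    have h := (sum_sq_outProb_le_of_pairwise_areMUB hB hMUB hA.1).trans
      (add_le_add_left hA.re_trace_mul_self_le _)
    simp only [q, div_pow, ← Finset.sum_div]
    rw [div_le_iff₀ (by positivity)]
    linarith
  calc _ ≤ ∑ m, -logb 2 (∑ i, q m i ^ 2) :=
        card_mul_logb_le_sum_neg_logb one_lt_two (fun m => sum_sq_pos_of_sum_eq_one (hq1 m)) hcoll
    _ ≤ _ := Finset.sum_le_sum fun m _ => neg_logb_sum_sq_le_shannonEntropy (hq m) (hq1 m)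

lemma IsONB.mutInfo_uniform {d : ℕ} {S : Type*} [Fintype S] {B : Fin d → Fin d → ℂ}
    (hB : IsONB B) (E : S → Matrix (Fin d) (Fin d) ℂ) :
    mutInfo B (fun _ => 1 / (d : ℝ)) E =
      logb 2 d - ∑ s, (E s).trace.re / d * posteriorEntropy B (E s) := by
  rw [mutInfo, shannonEntropy_uniform]
  congr 1
  refine Finset.sum_congr rfl fun s _ => ?_
  have hout : ∑ i, 1 / (d : ℝ) * outProb (E s) (B i) = (E s).trace.re / d := by
    rw [← Finset.mul_sum, hB.sum_outProb]; ring
  rw [hout, posteriorEntropy]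
  congr 2
  funext i
  rcases eq_or_ne (d : ℝ) 0 with hd | hd
  · exact Fin.elim0 (Fin.cast (by exact_mod_cast hd) i)
  rcases eq_or_ne (E s).trace.re 0 with ht | ht
  · simp [ht]
  · field_simp

theorem sum_mutInfo_uniform_le {ι : Type*} [Fintype ι] {d : ℕ} (hd : 0 < d)
    {S : Type*} [Fintype S] {B : ι → Fin d → Fin d → ℂ} (hB : ∀ m, IsONB (B m))
    (hMUB : Pairwise fun m n => AreMUB (B m) (B n))
    {E : S → Matrix (Fin d) (Fin d) ℂ} (hE : IsPOVM E) :
    ∑ m, mutInfo (B m) (fun _ => 1 / (d : ℝ)) E ≤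
      Fintype.card ι * (logb 2 d - logb 2 (Fintype.card ι / (1 + (Fintype.card ι - 1) / d))) := by
  have hpsd : ∀ s, (E s).PosSemidef := hE.1
  set K := logb 2 (Fintype.card ι / (1 + (Fintype.card ι - 1) / d))
  have htotal : ∑ s, (E s).trace.re = d := by
    simpa [trace_sum] using congrArg (fun M => M.trace.re) hE.2
  have hpost (s : S) : (E s).trace.re * (Fintype.card ι * K) ≤
      (E s).trace.re * ∑ m, posteriorEntropy (B m) (E s) := by
    rcases (Complex.nonneg_iff.mp (hpsd s).trace_nonneg).1.eq_or_lt with h | h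
    · simp [← h]
    · exact mul_le_mul_of_nonneg_left
        (card_mul_logb_le_sum_posteriorEntropy hB hMUB (hpsd s) h) h.le
  have hd' : (0 : ℝ) < d := by exact_mod_cast hd
  calc ∑ m, mutInfo (B m) (fun _ => 1 / (d : ℝ)) E
      = Fintype.card ι * logb 2 d -
          (∑ s, (E s).trace.re * ∑ m, posteriorEntropy (B m) (E s)) / d := by
        simp only [(hB _).mutInfo_uniform, Finset.sum_sub_distrib, Finset.sum_const,
          Finset.card_univ, nsmul_eq_mul, Finset.mul_sum, Finset.sum_div]
        rw [Finset.sum_comm]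
        congr 1
        exact Finset.sum_congr rfl fun _ _ => Finset.sum_congr rfl fun _ _ => by ring
    _ ≤ Fintype.card ι * logb 2 d - (∑ s, (E s).trace.re * (Fintype.card ι * K)) / d := by
        gcongr _ - ?_ / _
        exact Finset.sum_le_sum fun s _ => hpost s
    _ = Fintype.card ι * (logb 2 d - K) := by
        rw [← Finset.sum_mul, htotal]
        field_simp

lemma add_one_mul_logb_sub_logb_lt {x : ℝ} (hx : 0 < x) :
    (x + 1) * (logb 2 x - logb 2 ((x + 1) / 2)) < x := by
  have hx1 : 0 < x + 1 := by linarith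
  have hlog2 : 0 < log 2 := log_pos one_lt_two
  have hlogy : log (x / (x + 1)) ≤ -1 / (x + 1) := by
    have h := log_le_sub_one_of_pos (div_pos hx hx1)
    rwa [show x / (x + 1) - 1 = -1 / (x + 1) by field_simp; ring] at h
  have hsplit : logb 2 x - logb 2 ((x + 1) / 2) = 1 + log (x / (x + 1)) / log 2 := by
    rw [logb, logb, log_div hx1.ne' two_ne_zero, log_div hx.ne' hx1.ne']
    field_simp
    ring
  -- `log 2 < 1` is where the strict inequality comes from
  have hlogb : log (x / (x + 1)) / log 2 < -1 / (x + 1) := by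
    rw [div_lt_iff₀ hlog2]
    have := mul_lt_mul_of_neg_left (log_two_lt_d9.trans (by norm_num : (0.6931471808 : ℝ) < 1))
      (div_neg_of_neg_of_pos neg_one_lt_zero hx1)
    linarith
  calc (x + 1) * (logb 2 x - logb 2 ((x + 1) / 2)) < (x + 1) * (1 + -1 / (x + 1)) := by
        rw [hsplit]; gcongr
    _ = x := by field_simp; ring

/-- `d+1` pairwise MUBs, uniform priors: `∑ₘ Iₘ < d`; equivalently the average mutual
information per basis is less than `d/(d+1)` bits. -/
theorem dplus1_mub_total_info_lt
    {S : Type*} [Fintype S] (d : ℕ) (hd : 2 ≤ d)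
    (B : Fin (d + 1) → Fin d → Fin d → ℂ)
    (hB : ∀ m, IsONB (B m))
    (hMUB : ∀ m n, m ≠ n → AreMUB (B m) (B n))
    (E : S → Matrix (Fin d) (Fin d) ℂ) (hE : IsPOVM E) :
    ∑ m, mutInfo (B m) (fun _ => 1 / (d : ℝ)) E < (d : ℝ) ∧
    (∑ m, mutInfo (B m) (fun _ => 1 / (d : ℝ)) E) / ((d : ℝ) + 1) < (d : ℝ) / ((d : ℝ) + 1) := by
  have hd0 : (0 : ℝ) < d := by exact_mod_cast (by omega : 0 < d)
  have hbound := sum_mutInfo_uniform_le (by omega) hB (fun m n h => hMUB m n h) hE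
  have hk : ((d + 1 : ℕ) : ℝ) / (1 + ((d + 1 : ℕ) - 1) / d) = (d + 1) / 2 := by
    push_cast
    rw [add_sub_cancel_right, div_self hd0.ne']
    ring
  rw [Fintype.card_fin, hk, Nat.cast_succ] at hbound
  have hlt := hbound.trans_lt (add_one_mul_logb_sub_logb_lt hd0)
  exact ⟨hlt, div_lt_div_of_pos_right hlt (by positivity)⟩
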